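/- Let b > 0 and let α : [0,b] → ℝ be differentiable with 0 < α(t) < 1 on [0,b] and |α'(t)| ≤ L. With κ = Γ(α(0))·Γ(1−α(0)), the function g(t) = (1/κ) ∫₀¹ (tz)^{α(0)−α(tz)} (1−z)^{α(0)−1} z^{−α(0)} dz is differentiable on (0,b), and for every ε with 0 < ε < 1−α(0) there is a constant C_ε > 0 such that |g'(t)| ≤ C_ε · t^{−ε} for all t ∈ (0,b); in particular g' ∈ L¹(0,b). -/

import Mathlib

/-!
Write `g t = c ∫₀¹ φ(tz) (1-z)^(α 0 - 1) z^(-α 0) dz` with `φ u = u ^ (α 0 - α u)`.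
Since `|α 0 - α u| ≤ L u` and `u |log u|` is bounded, `φ` is bounded on `(0, b]` and
`|φ' u| ≲ |log u| + 1`. Differentiating under the integral sign, the chain-rule factor `z` turns
`z^(-α 0)` into `z^(1 - α 0)`, which absorbs `|log z|`; hence `|g' t| ≲ |log t| + 1 ≲ t^(-ε)`
for every `ε > 0`, and any `ε < 1` gives integrability.
-/

open MeasureTheory Set Filter intervalIntegral Real
open scoped Interval Topology

theorem mul_abs_log_le_one_add_sq {u b : ℝ} (hu : 0 < u) (hub : u ≤ b) :
    u * |log u| ≤ 1 + b ^ 2 := by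
  rcases le_or_gt u 1 with hu1 | hu1
  · have := abs_log_mul_self_lt u hu hu1
    rw [abs_mul, abs_of_pos hu, mul_comm] at this
    nlinarith [sq_nonneg b]
  · rw [abs_of_nonneg (log_nonneg hu1.le)]
    have : log u ≤ u := (log_le_sub_one_of_pos hu).trans (by linarith)
    nlinarith

theorem intervalIntegrable_rpow_mul_one_sub_rpow {p q : ℝ} (hp : -1 < p) (hq : -1 < q) :
    IntervalIntegrable (fun z : ℝ => z ^ p * (1 - z) ^ q) volume 0 1 := by
  have hβ := (Complex.betaIntegral_convergent (u := p + 1) (v := q + 1)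
    (by simp; linarith) (by simp; linarith)).norm
  refine hβ.mono_fun (by fun_prop) ?_
  filter_upwards [ae_restrict_mem measurableSet_uIoc] with z hz
  rw [uIoc_of_le zero_le_one] at hz
  rw [← Complex.norm_real, Complex.ofReal_mul, Complex.ofReal_cpow hz.1.le,
    Complex.ofReal_cpow (by linarith [hz.2]), norm_norm]
  push_cast
  simp

theorem intervalIntegrable_one_sub_rpow {q : ℝ} (hq : -1 < q) :
    IntervalIntegrable (fun z : ℝ => (1 - z) ^ q) volume 0 1 := by
  simpa only [rpow_zero, one_mul] using
    intervalIntegrable_rpow_mul_one_sub_rpow (p := 0) (by norm_num) hq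

theorem abs_log_add_le_mul_rpow_neg {t b ε c : ℝ} (ht : 0 < t) (htb : t ≤ b) (hε : 0 < ε)
    (hc : 0 ≤ c) : |log t| + c ≤ (1 / ε + (b + c) * b ^ ε) * t ^ (-ε) := by
  have hlog : |log t| ≤ t ^ (-ε) / ε + b := by
    rcases le_or_gt t 1 with ht1 | ht1
    · have := log_le_rpow_div (inv_nonneg.2 ht.le) hε
      rw [log_inv, inv_rpow ht.le, ← rpow_neg ht.le] at this
      rw [abs_of_nonpos (log_nonpos ht.le ht1)]
      linarith
    · rw [abs_of_nonneg (log_nonneg ht1.le)]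
      have := (log_le_sub_one_of_pos ht).trans (by linarith : t - 1 ≤ b)
      have : 0 ≤ t ^ (-ε) / ε := by positivity
      linarith
  have hone : 1 ≤ b ^ ε * t ^ (-ε) := by
    rw [rpow_neg ht.le, ← div_eq_mul_inv, one_le_div (by positivity)]
    exact rpow_le_rpow ht.le htb hε.le
  have hbc : 0 ≤ b + c := by linarith
  calc |log t| + c ≤ t ^ (-ε) / ε + (b + c) * (b ^ ε * t ^ (-ε)) := by nlinarith
    _ = (1 / ε + (b + c) * b ^ ε) * t ^ (-ε) := by ring

noncomputable def varPow (α : ℝ → ℝ) (u : ℝ) : ℝ := u ^ (α 0 - α u)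

section VarPow

variable {α α' : ℝ → ℝ} {b L u : ℝ}

theorem abs_apply_zero_sub_le_mul (hα : ∀ v ∈ Icc 0 b, HasDerivAt α (α' v) v)
    (hL : ∀ v ∈ Icc 0 b, |α' v| ≤ L) (hu : u ∈ Icc 0 b) : |α 0 - α u| ≤ L * u := by
  have := (convex_Icc 0 b).norm_image_sub_le_of_norm_hasDerivWithin_le
    (fun v hv => (hα v hv).hasDerivWithinAt) (fun v hv => hL v hv) ⟨le_rfl, hu.1.trans hu.2⟩ hu
  simpa [abs_sub_comm, abs_of_nonneg hu.1] using this

theorem varPow_le (hα : ∀ v ∈ Icc 0 b, HasDerivAt α (α' v) v)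
    (hL : ∀ v ∈ Icc 0 b, |α' v| ≤ L) (hu : 0 < u) (hub : u ≤ b) :
    varPow α u ≤ exp (L * (1 + b ^ 2)) := by
  have hL0 : 0 ≤ L := (abs_nonneg _).trans (hL u ⟨hu.le, hub⟩)
  rw [varPow, rpow_def_of_pos hu, exp_le_exp]
  calc log u * (α 0 - α u) ≤ |α 0 - α u| * |log u| := by
        rw [← abs_mul, mul_comm]; exact le_abs_self _
    _ ≤ L * u * |log u| := by
        gcongr; exact abs_apply_zero_sub_le_mul hα hL ⟨hu.le, hub⟩
    _ ≤ L * (1 + b ^ 2) := by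
        rw [mul_assoc]; gcongr; exact mul_abs_log_le_one_add_sq hu hub

theorem hasDerivAt_varPow (hu : 0 < u) (hα : HasDerivAt α (α' u) u) :
    HasDerivAt (varPow α) (varPow α u * (-α' u * log u + (α 0 - α u) / u)) u := by
  refine ((hasDerivAt_id u).rpow ((hasDerivAt_const u (α 0)).sub hα) hu).congr_deriv ?_
  simp only [varPow, id, Pi.sub_apply, rpow_sub_one hu.ne']
  field_simp
  ring

theorem abs_deriv_varPow_le (hα : ∀ v ∈ Icc 0 b, HasDerivAt α (α' v) v)
    (hL : ∀ v ∈ Icc 0 b, |α' v| ≤ L) (hu : 0 < u) (hub : u ≤ b) :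
    |deriv (varPow α) u| ≤ exp (L * (1 + b ^ 2)) * L * (|log u| + 1) := by
  have huI : u ∈ Icc 0 b := ⟨hu.le, hub⟩
  have hpos : 0 ≤ varPow α u := rpow_nonneg hu.le _
  rw [(hasDerivAt_varPow hu (hα u huI)).deriv, abs_mul, abs_of_nonneg hpos]
  have hinner : |-α' u * log u + (α 0 - α u) / u| ≤ L * (|log u| + 1) := by
    calc |-α' u * log u + (α 0 - α u) / u| ≤ |α' u| * |log u| + |α 0 - α u| / u := by
          simpa [abs_mul, abs_div, abs_of_pos hu] using abs_add_le (-α' u * log u) ((α 0 - α u) / u)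
      _ ≤ L * |log u| + L * u / u := by
          gcongr
          · exact hL u huI
          · exact abs_apply_zero_sub_le_mul hα hL huI
      _ = L * (|log u| + 1) := by field_simp
  calc varPow α u * |-α' u * log u + (α 0 - α u) / u|
      ≤ exp (L * (1 + b ^ 2)) * (L * (|log u| + 1)) :=
        mul_le_mul (varPow_le hα hL hu hub) hinner (abs_nonneg _) (exp_pos _).le
    _ = exp (L * (1 + b ^ 2)) * L * (|log u| + 1) := by ring

theorem continuousOn_varPow (hα : ∀ v ∈ Icc 0 b, HasDerivAt α (α' v) v) :
    ContinuousOn (varPow α) (Ioc 0 b) := fun v hv =>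
  (hasDerivAt_varPow hv.1 (hα v (Ioc_subset_Icc_self hv))).continuousAt.continuousWithinAt

end VarPow

noncomputable def integrand (α : ℝ → ℝ) (t z : ℝ) : ℝ :=
  varPow α (t * z) * (1 - z) ^ (α 0 - 1) * z ^ (-α 0)

noncomputable def integrandDeriv (α : ℝ → ℝ) (t z : ℝ) : ℝ :=
  deriv (varPow α) (t * z) * z * (1 - z) ^ (α 0 - 1) * z ^ (-α 0)

theorem mul_mem_Ioc_of_mem_Ioc_one {t z b : ℝ} (ht : t ∈ Ioc 0 b) (hz : z ∈ Ioc 0 1) :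
    t * z ∈ Ioc 0 b :=
  ⟨mul_pos ht.1 hz.1, (mul_le_of_le_one_right ht.1.le hz.2).trans ht.2⟩

section Integrand

variable {α α' : ℝ → ℝ} {b L t z : ℝ}

theorem hasDerivAt_integrand (hα : ∀ v ∈ Icc 0 b, HasDerivAt α (α' v) v) (ht : t ∈ Ioc 0 b)
    (hz : z ∈ Ioc 0 1) : HasDerivAt (integrand α · z) (integrandDeriv α t z) t := by
  have htz := mul_mem_Ioc_of_mem_Ioc_one ht hz
  have hv := (hasDerivAt_varPow htz.1 (hα _ (Ioc_subset_Icc_self htz))).differentiableAt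
  have := ((hv.hasDerivAt.comp t ((hasDerivAt_id t).mul_const z)).mul_const
    ((1 - z) ^ (α 0 - 1))).mul_const (z ^ (-α 0))
  simp only [id, one_mul] at this
  exact this

theorem abs_integrand_le (hα : ∀ v ∈ Icc 0 b, HasDerivAt α (α' v) v)
    (hL : ∀ v ∈ Icc 0 b, |α' v| ≤ L) (ht : t ∈ Ioc 0 b) (hz : z ∈ Ioc 0 1) :
    |integrand α t z| ≤ exp (L * (1 + b ^ 2)) * (z ^ (-α 0) * (1 - z) ^ (α 0 - 1)) := by
  have htz := mul_mem_Ioc_of_mem_Ioc_one ht hz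
  have h1z : 0 ≤ 1 - z := by linarith [hz.2]
  have hP : 0 ≤ (1 - z) ^ (α 0 - 1) := rpow_nonneg h1z _
  have hQ : 0 ≤ z ^ (-α 0) := rpow_nonneg hz.1.le _
  have hV : 0 ≤ varPow α (t * z) := rpow_nonneg htz.1.le _
  rw [integrand, abs_of_nonneg (by positivity)]
  calc varPow α (t * z) * (1 - z) ^ (α 0 - 1) * z ^ (-α 0)
      ≤ exp (L * (1 + b ^ 2)) * (1 - z) ^ (α 0 - 1) * z ^ (-α 0) := by
        gcongr; exact varPow_le hα hL htz.1 htz.2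
    _ = exp (L * (1 + b ^ 2)) * (z ^ (-α 0) * (1 - z) ^ (α 0 - 1)) := by ring

theorem abs_integrandDeriv_le (hα : ∀ v ∈ Icc 0 b, HasDerivAt α (α' v) v)
    (hL : ∀ v ∈ Icc 0 b, |α' v| ≤ L) (ha1 : α 0 < 1) (ht : t ∈ Ioc 0 b) (hz : z ∈ Ioc 0 1) :
    |integrandDeriv α t z| ≤
      exp (L * (1 + b ^ 2)) * L * (|log t| + (1 / (1 - α 0) + 1)) * (1 - z) ^ (α 0 - 1) := by
  have htz := mul_mem_Ioc_of_mem_Ioc_one ht hz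
  have h1z : 0 ≤ 1 - z := by linarith [hz.2]
  have hL0 : 0 ≤ L := (abs_nonneg _).trans (hL t (Ioc_subset_Icc_self ht))
  have hzpow : z * z ^ (-α 0) = z ^ (1 - α 0) := by
    rw [sub_eq_add_neg, rpow_add hz.1, rpow_one]
  have hzpow_le : z ^ (1 - α 0) ≤ 1 := rpow_le_one hz.1.le hz.2 (by linarith)
  have hzlog : z ^ (1 - α 0) * |log z| ≤ 1 / (1 - α 0) := by
    have := abs_log_mul_self_rpow_lt z (1 - α 0) hz.1 hz.2 (by linarith)
    rw [abs_mul, abs_of_nonneg (rpow_nonneg hz.1.le _)] at this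
    linarith
  have hlog : |log (t * z)| ≤ |log t| + |log z| := by
    rw [log_mul ht.1.ne' hz.1.ne']; exact abs_add_le _ _
  have hP : 0 ≤ (1 - z) ^ (α 0 - 1) := rpow_nonneg h1z _
  have hQ : 0 ≤ z ^ (-α 0) := rpow_nonneg hz.1.le _
  have hz0 : 0 ≤ z := hz.1.le
  rw [integrandDeriv, abs_mul, abs_mul, abs_mul, abs_of_pos hz.1, abs_of_nonneg hP,
    abs_of_nonneg hQ]
  set A := exp (L * (1 + b ^ 2))
  calc |deriv (varPow α) (t * z)| * z * (1 - z) ^ (α 0 - 1) * z ^ (-α 0)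
      ≤ A * L * (|log t| + |log z| + 1) * z * (1 - z) ^ (α 0 - 1) * z ^ (-α 0) := by
        gcongr
        exact (abs_deriv_varPow_le hα hL htz.1 htz.2).trans (by gcongr)
    _ = A * L * ((|log t| + 1) * z ^ (1 - α 0) + z ^ (1 - α 0) * |log z|) *
          (1 - z) ^ (α 0 - 1) := by rw [← hzpow]; ring
    _ ≤ A * L * ((|log t| + 1) * 1 + 1 / (1 - α 0)) * (1 - z) ^ (α 0 - 1) := by gcongr
    _ = A * L * (|log t| + (1 / (1 - α 0) + 1)) * (1 - z) ^ (α 0 - 1) := by ring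

theorem aestronglyMeasurable_integrand (hα : ∀ v ∈ Icc 0 b, HasDerivAt α (α' v) v)
    (ht : t ∈ Ioc 0 b) : AEStronglyMeasurable (integrand α t) (volume.restrict (Ioc 0 1)) := by
  have hcont : ContinuousOn (fun z => varPow α (t * z)) (Ioc 0 1) :=
    (continuousOn_varPow hα).comp (by fun_prop) fun z hz => mul_mem_Ioc_of_mem_Ioc_one ht hz
  have hweight : Measurable fun z : ℝ => (1 - z) ^ (α 0 - 1) * z ^ (-α 0) := by fun_prop
  have hsplit : integrand α t = (fun z => varPow α (t * z)) *
      fun z => (1 - z) ^ (α 0 - 1) * z ^ (-α 0) := by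
    ext z; simp only [integrand, Pi.mul_apply, mul_assoc]
  rw [hsplit]
  exact (hcont.aestronglyMeasurable measurableSet_Ioc).mul hweight.aestronglyMeasurable

theorem measurable_integrandDeriv : Measurable (integrandDeriv α t) := by
  have := measurable_deriv (varPow α)
  unfold integrandDeriv
  fun_prop

end Integrand

section Integral

variable {α α' : ℝ → ℝ} {b L t : ℝ}

theorem hasDerivAt_integral_integrand (hα : ∀ v ∈ Icc 0 b, HasDerivAt α (α' v) v)
    (hL : ∀ v ∈ Icc 0 b, |α' v| ≤ L) (ha0 : 0 < α 0) (ha1 : α 0 < 1) (ht : t ∈ Ioo 0 b) :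
    HasDerivAt (fun s => ∫ z in (0:ℝ)..1, integrand α s z)
      (∫ z in (0:ℝ)..1, integrandDeriv α t z) t := by
  have hIoc : Ι (0:ℝ) 1 = Ioc 0 1 := uIoc_of_le zero_le_one
  have hnhds : Ioo (t / 2) b ∈ 𝓝 t := Ioo_mem_nhds (by linarith [ht.1]) ht.2
  have hsub : Ioo (t / 2) b ⊆ Ioc 0 b := fun s hs => ⟨by linarith [ht.1, hs.1], hs.2.le⟩
  -- On `(t/2, b)` the logarithm is bounded, giving a uniform integrable majorant.
  set M := max |log (t / 2)| |log b|
  have hlog : ∀ s ∈ Ioo (t / 2) b, |log s| ≤ M := fun s hs =>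
    abs_le_max_abs_abs (log_le_log (by linarith [ht.1]) hs.1.le)
      (log_le_log (by linarith [ht.1, hs.1]) hs.2.le)
  have hbeta := intervalIntegrable_rpow_mul_one_sub_rpow (p := -α 0) (q := α 0 - 1)
    (by linarith) (by linarith)
  have hweight := intervalIntegrable_one_sub_rpow (q := α 0 - 1) (by linarith)
  refine (hasDerivAt_integral_of_dominated_loc_of_deriv_le (F' := integrandDeriv α)
    (bound := fun z => exp (L * (1 + b ^ 2)) * L * (M + (1 / (1 - α 0) + 1)) *
      (1 - z) ^ (α 0 - 1)) hnhds ?_ ?_ ?_ ?_ (hweight.const_mul _) ?_).2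
  · filter_upwards [hnhds] with s hs
    rw [hIoc]
    exact aestronglyMeasurable_integrand hα (hsub hs)
  · refine (hbeta.const_mul (exp (L * (1 + b ^ 2)))).mono_fun
      (by rw [hIoc]; exact aestronglyMeasurable_integrand hα (Ioo_subset_Ioc_self ht)) ?_
    filter_upwards [ae_restrict_mem measurableSet_uIoc] with z hz
    rw [hIoc] at hz
    exact (abs_integrand_le hα hL (Ioo_subset_Ioc_self ht) hz).trans (le_abs_self _)
  · exact measurable_integrandDeriv.aestronglyMeasurable
  · refine ae_of_all _ fun z hz s hs => ?_
    rw [hIoc] at hz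
    refine (abs_integrandDeriv_le hα hL ha1 (hsub hs) hz).trans ?_
    have hP := rpow_nonneg (sub_nonneg.2 hz.2) (α 0 - 1)
    have hL0 := (abs_nonneg _).trans (hL s (Ioc_subset_Icc_self (hsub hs)))
    gcongr
    exact hlog s hs
  · refine ae_of_all _ fun z hz s hs => ?_
    rw [hIoc] at hz
    exact hasDerivAt_integrand hα (hsub hs) hz

theorem abs_integral_integrandDeriv_le (hα : ∀ v ∈ Icc 0 b, HasDerivAt α (α' v) v)
    (hL : ∀ v ∈ Icc 0 b, |α' v| ≤ L) (ha0 : 0 < α 0) (ha1 : α 0 < 1) (ht : t ∈ Ioc 0 b) :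
    |∫ z in (0:ℝ)..1, integrandDeriv α t z| ≤
      exp (L * (1 + b ^ 2)) * L * (∫ z in (0:ℝ)..1, (1 - z) ^ (α 0 - 1)) *
        (|log t| + (1 / (1 - α 0) + 1)) := by
  have hweight := intervalIntegrable_one_sub_rpow (q := α 0 - 1) (by linarith)
  calc |∫ z in (0:ℝ)..1, integrandDeriv α t z|
      ≤ ∫ z in (0:ℝ)..1, exp (L * (1 + b ^ 2)) * L * (|log t| + (1 / (1 - α 0) + 1)) *
          (1 - z) ^ (α 0 - 1) :=
        norm_integral_le_of_norm_le (f := integrandDeriv α t) zero_le_one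
          (ae_of_all _ fun z hz => abs_integrandDeriv_le hα hL ha1 ht hz) (hweight.const_mul _)
    _ = _ := by rw [intervalIntegral.integral_const_mul]; ring

end Integral

theorem exists_pos_abs_le_mul_rpow_neg {f : ℝ → ℝ} {b K c ε : ℝ} (hK : 0 ≤ K) (hc : 0 ≤ c)
    (hε : 0 < ε) (hf : ∀ t ∈ Ioo 0 b, |f t| ≤ K * (|log t| + c)) :
    ∃ C, 0 < C ∧ ∀ t ∈ Ioo 0 b, |f t| ≤ C * t ^ (-ε) := by
  refine ⟨max 1 (K * (1 / ε + (b + c) * b ^ ε)), lt_max_of_lt_left one_pos, fun t ht => ?_⟩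
  calc |f t| ≤ K * (|log t| + c) := hf t ht
    _ ≤ K * ((1 / ε + (b + c) * b ^ ε) * t ^ (-ε)) :=
        mul_le_mul_of_nonneg_left (abs_log_add_le_mul_rpow_neg ht.1 ht.2.le hε hc) hK
    _ ≤ max 1 (K * (1 / ε + (b + c) * b ^ ε)) * t ^ (-ε) := by
        rw [← mul_assoc]
        exact mul_le_mul_of_nonneg_right (le_max_right _ _) (rpow_nonneg ht.1.le _)

theorem integrableOn_Ioo_of_abs_le_mul_rpow_neg {f : ℝ → ℝ} {b C ε : ℝ} (hb : 0 < b)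
    (hε : ε < 1) (hf_meas : AEStronglyMeasurable f) (hf : ∀ t ∈ Ioo 0 b, |f t| ≤ C * t ^ (-ε)) :
    IntegrableOn f (Ioo 0 b) := by
  refine (((integrableOn_Ioo_rpow_iff (s := -ε) hb).2 (by linarith)).const_mul C).mono'
    hf_meas.restrict ?_
  filter_upwards [ae_restrict_mem measurableSet_Ioo] with t ht
  exact hf t ht

/-- with `κ = Γ(α 0) Γ(1 - α 0)`, the function
`g t = (1/κ) ∫₀¹ (tz)^(α 0 - α (tz)) (1-z)^(α 0 - 1) z^(-α 0) dz`
is differentiable on `(0,b)`, for each `0 < ε < 1 - α 0` there is `C_ε > 0` with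
`|g' t| ≤ C_ε t^(-ε)` on `(0,b)`, and `g' ∈ L¹(0,b)`. -/
theorem stmt2 (b L : ℝ) (hb : 0 < b) (α α' : ℝ → ℝ)
    (hα_diff : ∀ t ∈ Icc (0:ℝ) b, HasDerivAt α (α' t) t)
    (hα_range : ∀ t ∈ Icc (0:ℝ) b, 0 < α t ∧ α t < 1)
    (hα_lip : ∀ t ∈ Icc (0:ℝ) b, |α' t| ≤ L)
    (g : ℝ → ℝ)
    (hg : ∀ t : ℝ, g t = (1 / (Real.Gamma (α 0) * Real.Gamma (1 - α 0))) *
      ∫ z in (0:ℝ)..1, (t * z) ^ (α 0 - α (t * z)) * (1 - z) ^ (α 0 - 1) * z ^ (-(α 0))) :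
    (∀ t ∈ Ioo (0:ℝ) b, DifferentiableAt ℝ g t) ∧
    (∀ ε : ℝ, 0 < ε → ε < 1 - α 0 → ∃ C : ℝ, 0 < C ∧
      ∀ t ∈ Ioo (0:ℝ) b, |deriv g t| ≤ C * t ^ (-ε)) ∧
    IntegrableOn (deriv g) (Ioo 0 b) := by
  obtain ⟨ha0, ha1⟩ := hα_range 0 ⟨le_rfl, hb.le⟩
  set c := 1 / (Real.Gamma (α 0) * Real.Gamma (1 - α 0))
  have hg_deriv : ∀ t ∈ Ioo 0 b,
      HasDerivAt g (c * ∫ z in (0:ℝ)..1, integrandDeriv α t z) t := fun t ht => by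
    rw [show g = fun s => c * ∫ z in (0:ℝ)..1, integrand α s z from funext hg]
    exact (hasDerivAt_integral_integrand hα_diff hα_lip ha0 ha1 ht).const_mul c
  have hL : 0 ≤ L := (abs_nonneg _).trans (hα_lip 0 ⟨le_rfl, hb.le⟩)
  have hI : 0 ≤ ∫ z in (0:ℝ)..1, (1 - z) ^ (α 0 - 1) :=
    integral_nonneg zero_le_one fun z hz => rpow_nonneg (by linarith [hz.2]) _
  have hlog_bound : ∀ t ∈ Ioo 0 b, |deriv g t| ≤
      |c| * (exp (L * (1 + b ^ 2)) * L * ∫ z in (0:ℝ)..1, (1 - z) ^ (α 0 - 1)) *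
        (|log t| + (1 / (1 - α 0) + 1)) := fun t ht => by
    rw [(hg_deriv t ht).deriv, abs_mul, mul_assoc]
    exact mul_le_mul_of_nonneg_left
      (abs_integral_integrandDeriv_le hα_diff hα_lip ha0 ha1 (Ioo_subset_Ioc_self ht))
      (abs_nonneg c)
  have hpow := fun ε (hε : 0 < ε) =>
    exists_pos_abs_le_mul_rpow_neg (by positivity) (by have := sub_pos.2 ha1; positivity) hε
      hlog_bound
  refine ⟨fun t ht => (hg_deriv t ht).differentiableAt, fun ε hε _ => hpow ε hε, ?_⟩
  obtain ⟨C, -, hC⟩ := hpow (1 / 2) one_half_pos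
  exact integrableOn_Ioo_of_abs_le_mul_rpow_neg hb (by norm_num)
    (measurable_deriv g).aestronglyMeasurable hC
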